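/- Let C_{HL,b}(α) = sup over measurable sets E ⊆ ℝⁿ with 0 < |E| < ∞ of (1/|E|)·|{x ∈ ℝⁿ : M_{HL,b} χ_E(x) > α}|. There exist a constant c_n > 0 depending only on n and a threshold α₀ ∈ (0,1) such that for all α ∈ (α₀, 1), C_{HL,b}(α) − 1 ≥ c_n · (1/α − 1)^{2/(n+1)}. -/

import Mathlib

open MeasureTheory Set Filter
open scoped ENNReal

/-- The uncentered Hardy–Littlewood maximal operator with respect to
Euclidean balls on `ℝⁿ`. -/
noncomputable def MHLb (n : ℕ) (f : EuclideanSpace ℝ (Fin n) → ℝ≥0∞)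
    (x : EuclideanSpace ℝ (Fin n)) : ℝ≥0∞ :=
  ⨆ (z : EuclideanSpace ℝ (Fin n)) (r : ℝ) (_ : 0 < r) (_ : x ∈ Metric.ball z r),
    (∫⁻ y in Metric.ball z r, f y) / volume (Metric.ball z r)

/-- The sharp Tauberian constant `C_{HL,b}(α)` of the uncentered
Hardy–Littlewood maximal operator with respect to balls. -/
noncomputable def CHLb (n : ℕ) (α : ℝ) : ℝ≥0∞ :=
  ⨆ (E : Set (EuclideanSpace ℝ (Fin n))) (_ : MeasurableSet E)
    (_ : 0 < volume E) (_ : volume E < ⊤),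
    volume {x : EuclideanSpace ℝ (Fin n) |
      MHLb n (E.indicator 1) x > ENNReal.ofReal α} / volume E

/-
Take `E` the unit ball. A point `x` with `1 ≤ ‖x‖ < 1 + t` lies in the ball of radius `1/2`
centred at `(1/2 + t) • x / ‖x‖`, which pokes out of `E` only in a cap of height `3t` and
half-width `√(3t)`, hence of volume `O(t^((n+1)/2))`. So `M χ_E > α` on the whole ball of radius
`1 + t` once `t^((n+1)/2) ≲ 1 - α`, giving `C(α) ≥ (1 + t)ⁿ ≥ 1 + t` with
`t ≍ (1 - α)^(2/(n+1))`; finally `1/α - 1 ≤ 2 (1 - α)` for `α ≥ 1/2`.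
-/

open Metric

section MaximalFunction

variable {n : ℕ}

lemma lintegral_ball_div_le_MHLb (f : EuclideanSpace ℝ (Fin n) → ℝ≥0∞)
    {x z : EuclideanSpace ℝ (Fin n)} {r : ℝ} (hr : 0 < r) (hx : x ∈ ball z r) :
    (∫⁻ y in ball z r, f y) / volume (ball z r) ≤ MHLb n f x :=
  le_iSup₂_of_le z r (le_iSup₂_of_le hr hx le_rfl)

lemma ofReal_lt_MHLb_indicator {E : Set (EuclideanSpace ℝ (Fin n))} (hE : MeasurableSet E)
    {α r : ℝ} {x z : EuclideanSpace ℝ (Fin n)} (hr : 0 < r) (hx : x ∈ ball z r)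
    (hdiff : volume (ball z r \ E) < (1 - ENNReal.ofReal α) * volume (ball z r)) :
    ENNReal.ofReal α < MHLb n (E.indicator 1) x := by
  set B := ball z r
  have hα : ENNReal.ofReal α ≤ 1 := by
    by_contra h
    simp [tsub_eq_zero_of_le (not_le.1 h).le] at hdiff
  have hmass : ENNReal.ofReal α * volume B < volume (B ∩ E) := by
    have hdiff_ne_top : volume (B \ E) ≠ ⊤ :=
      ((measure_mono sdiff_subset).trans_lt measure_ball_lt_top).ne
    rw [← ENNReal.add_lt_add_iff_right hdiff_ne_top, measure_inter_add_sdiff B hE]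
    calc ENNReal.ofReal α * volume B + volume (B \ E)
        < ENNReal.ofReal α * volume B + (1 - ENNReal.ofReal α) * volume B :=
          ENNReal.add_lt_add_left
            (ENNReal.mul_ne_top ENNReal.ofReal_ne_top measure_ball_lt_top.ne) hdiff
      _ = volume B := by rw [← add_mul, add_tsub_cancel_of_le hα, one_mul]
  refine lt_of_lt_of_le ?_ (lintegral_ball_div_le_MHLb _ hr hx)
  rw [lintegral_indicator_one hE, Measure.restrict_apply hE, inter_comm,
    ENNReal.lt_div_iff_mul_lt (.inl (measure_ball_pos volume z hr).ne')
      (.inl measure_ball_lt_top.ne)]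
  exact hmass

lemma le_CHLb {E : Set (EuclideanSpace ℝ (Fin n))} (hE : MeasurableSet E) (h0 : 0 < volume E)
    (htop : volume E < ⊤) (α : ℝ) :
    volume {x | MHLb n (E.indicator 1) x > ENNReal.ofReal α} / volume E ≤ CHLb n α :=
  le_iSup₂_of_le E hE (le_iSup₂_of_le h0 htop le_rfl)

end MaximalFunction

lemma volume_ball_diff_ball_zero_eq_of_norm_eq {F : Type*} [NormedAddCommGroup F]
    [InnerProductSpace ℝ F] [FiniteDimensional ℝ F] [MeasurableSpace F] [BorelSpace F]
    {p q : F} (h : ‖p‖ = ‖q‖) (r R : ℝ) :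
    volume (ball p r \ ball 0 R) = volume (ball q r \ ball 0 R) := by
  rw [← ((ℝ ∙ (p - q))ᗮ.reflection.measurePreserving).measure_preimage
    (measurableSet_ball.diff measurableSet_ball).nullMeasurableSet, preimage_sdiff,
    LinearIsometryEquiv.preimage_ball, LinearIsometryEquiv.preimage_ball,
    Submodule.reflection_symm, Submodule.reflection_sub h, map_zero]

lemma volume_euclidean_box {ι : Type*} [Fintype ι] (lo hi : ι → ℝ) :
    volume {y : EuclideanSpace ℝ ι | ∀ i, y i ∈ Icc (lo i) (hi i)}
      = ∏ i, ENNReal.ofReal (hi i - lo i) := by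
  have hbox : {y : EuclideanSpace ℝ ι | ∀ i, y i ∈ Icc (lo i) (hi i)}
      = (MeasurableEquiv.toLp 2 (ι → ℝ)).symm ⁻¹' univ.pi fun i => Icc (lo i) (hi i) := by
    ext y; simp [Pi.le_def, forall_and]
  rw [hbox, (EuclideanSpace.volume_preserving_symm_measurableEquiv_toLp ι).measure_preimage
    (MeasurableSet.univ_pi fun _ => measurableSet_Icc).nullMeasurableSet, volume_pi_pi]
  simp [Real.volume_Icc]

lemma sq_add_sq_le_norm_sq {ι : Type*} [Fintype ι] (y : EuclideanSpace ℝ ι) {i j : ι}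
    (hij : i ≠ j) : y i ^ 2 + y j ^ 2 ≤ ‖y‖ ^ 2 := by
  classical
  rw [EuclideanSpace.norm_sq_eq]
  simp only [Real.norm_eq_abs, sq_abs]
  exact (Finset.sum_pair hij).symm.le.trans
    (Finset.sum_le_univ_sum_of_nonneg fun k => sq_nonneg _)

lemma cap_coord_bounds {a P t : ℝ} (hP : 0 ≤ P) (ht0 : 0 ≤ t) (ht : t ≤ 1 / 6)
    (hball : (a - (1 / 2 + t)) ^ 2 + P < 1 / 4) (hout : 1 ≤ a ^ 2 + P) :
    a ∈ Icc (1 - 2 * t) (1 + t) ∧ P ≤ 3 * t := by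
  refine ⟨⟨by nlinarith, by nlinarith⟩, ?_⟩
  have : (1 / 2 - 3 * t) ^ 2 ≤ (a - (1 / 2 + t)) ^ 2 :=
    pow_le_pow_left₀ (by linarith) (by nlinarith) 2
  nlinarith

lemma ball_diff_ball_subset_box {ι : Type*} [Fintype ι] [DecidableEq ι] (i₀ : ι) {t : ℝ}
    (ht0 : 0 ≤ t) (ht : t ≤ 1 / 6) :
    ball ((1 / 2 + t) • EuclideanSpace.single i₀ (1 : ℝ)) (1 / 2) \ ball 0 1 ⊆
      {y | ∀ i, y i ∈ Icc (if i = i₀ then 1 - 2 * t else -√(3 * t))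
        (if i = i₀ then 1 + t else √(3 * t))} := by
  rintro y ⟨hy, hy1⟩ i
  rw [mem_ball_iff_norm] at hy
  rw [mem_ball_zero_iff, not_lt] at hy1
  set P := ‖y‖ ^ 2 - y i₀ ^ 2
  have hP : 0 ≤ P := by
    have := PiLp.norm_apply_le y i₀
    rw [Real.norm_eq_abs] at this
    nlinarith [abs_nonneg (y i₀), sq_abs (y i₀)]
  have hball : (y i₀ - (1 / 2 + t)) ^ 2 + P < 1 / 4 := by
    have h := norm_sub_sq_real y ((1 / 2 + t) • EuclideanSpace.single i₀ (1 : ℝ))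
    rw [inner_smul_right, EuclideanSpace.inner_single_right, norm_smul,
      PiLp.norm_single] at h
    simp only [Real.norm_eq_abs, abs_of_nonneg (by linarith : (0 : ℝ) ≤ 1 / 2 + t), abs_one,
      conj_trivial, one_mul, mul_one] at h
    nlinarith [pow_lt_pow_left₀ hy (norm_nonneg _) two_ne_zero]
  obtain ⟨hy₀, hP3⟩ := cap_coord_bounds hP ht0 ht hball (by nlinarith)
  by_cases hi : i = i₀
  · subst hi; simpa using hy₀
  · simp only [if_neg hi, mem_Icc, ← abs_le]
    apply Real.abs_le_sqrt
    nlinarith [sq_add_sq_le_norm_sq y hi]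

lemma volume_ball_diff_ball_le {m : ℕ} {t : ℝ} (ht0 : 0 ≤ t) (ht : t ≤ 1 / 6)
    {p : EuclideanSpace ℝ (Fin (m + 1))} (hp : ‖p‖ = 1) :
    volume (ball ((1 / 2 + t) • p) (1 / 2) \ ball 0 1)
      ≤ ENNReal.ofReal (2 ^ m * √(3 * t) ^ (m + 2)) := by
  rw [volume_ball_diff_ball_zero_eq_of_norm_eq
    (q := (1 / 2 + t) • EuclideanSpace.single 0 (1 : ℝ)) (by simp [norm_smul, hp])]
  refine (measure_mono (ball_diff_ball_subset_box 0 ht0 ht)).trans_eq ?_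
  rw [volume_euclidean_box, Fin.prod_univ_succ]
  simp only [if_true, Fin.succ_ne_zero, if_false, Finset.prod_const, Finset.card_univ,
    Fintype.card_fin]
  have hsqrt : 0 ≤ √(3 * t) := Real.sqrt_nonneg _
  rw [← ENNReal.ofReal_pow (by linarith), ← ENNReal.ofReal_mul (by linarith)]
  congr 1
  linear_combination (-(2 * √(3 * t)) ^ m) * Real.sq_sqrt (by positivity : 0 ≤ 3 * t)

lemma mem_ball_smul_inv_norm_smul {F : Type*} [NormedAddCommGroup F] [NormedSpace ℝ F]
    {x : F} (hx : x ≠ 0) {a r : ℝ} (h : |‖x‖ - a| < r) :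
    x ∈ ball (a • ‖x‖⁻¹ • x) r := by
  have hx' : ‖x‖ ≠ 0 := norm_ne_zero_iff.2 hx
  have hsub : x - (a * ‖x‖⁻¹) • x = (1 - a * ‖x‖⁻¹) • x := by
    rw [sub_smul, one_smul]
  rw [mem_ball_iff_norm, smul_smul, hsub]
  calc ‖(1 - a * ‖x‖⁻¹) • x‖ = |(1 - a * ‖x‖⁻¹) * ‖x‖| := by
        rw [norm_smul, abs_mul, abs_norm, Real.norm_eq_abs]
    _ = |‖x‖ - a| := by congr 1; field_simp
    _ < r := h

section Superlevel

variable {m : ℕ}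

lemma ball_one_add_subset_MHLb_indicator_gt {α t : ℝ} (ht0 : 0 ≤ t) (ht : t ≤ 1 / 6)
    (hcap : ENNReal.ofReal (2 ^ m * √(3 * t) ^ (m + 2))
      < (1 - ENNReal.ofReal α) * volume (ball (0 : EuclideanSpace ℝ (Fin (m + 1))) (1 / 2))) :
    ball 0 (1 + t) ⊆ {x | MHLb (m + 1) ((ball 0 1).indicator 1) x > ENNReal.ofReal α} := by
  intro x hx
  rw [mem_ball_zero_iff] at hx
  by_cases hx1 : ‖x‖ < 1
  · refine ofReal_lt_MHLb_indicator measurableSet_ball one_pos (mem_ball_zero_iff.2 hx1) ?_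
    rw [sdiff_self, measure_empty]
    exact ENNReal.mul_pos (left_ne_zero_of_mul (pos_of_gt hcap).ne')
      (measure_ball_pos volume _ one_pos).ne'
  · have hx0 : x ≠ 0 := by rintro rfl; simp at hx1
    have hxB : x ∈ ball ((1 / 2 + t) • ‖x‖⁻¹ • x) (1 / 2) :=
      mem_ball_smul_inv_norm_smul hx0 (abs_lt.2 ⟨by linarith, by linarith⟩)
    refine ofReal_lt_MHLb_indicator measurableSet_ball one_half_pos hxB ?_
    rw [Measure.addHaar_ball_center]
    exact (volume_ball_diff_ball_le ht0 ht (norm_smul_inv_norm hx0)).trans_lt hcap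

lemma ofReal_le_CHLb_sub_one {α t : ℝ} (hα : 0 ≤ α) (ht0 : 0 ≤ t) (ht : t ≤ 1 / 6)
    (hcap : 2 ^ m * √(3 * t) ^ (m + 2)
      < (1 - α) * (volume (ball (0 : EuclideanSpace ℝ (Fin (m + 1))) (1 / 2))).toReal) :
    ENNReal.ofReal t ≤ CHLb (m + 1) α - 1 := by
  have hsub := ball_one_add_subset_MHLb_indicator_gt (α := α) ht0 ht <| by
    rw [← ENNReal.ofReal_one, ← ENNReal.ofReal_sub _ hα,
      ← ENNReal.ofReal_toReal measure_ball_lt_top.ne,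
      ← ENNReal.ofReal_mul' ENNReal.toReal_nonneg]
    exact (ENNReal.ofReal_lt_ofReal_iff (lt_of_le_of_lt (by positivity) hcap)).2 hcap
  set V := volume (ball (0 : EuclideanSpace ℝ (Fin (m + 1))) 1)
  have hV : V ≠ 0 := (measure_ball_pos volume _ one_pos).ne'
  refine ENNReal.le_sub_of_add_le_right ENNReal.one_ne_top ?_
  calc ENNReal.ofReal t + 1 = ENNReal.ofReal (1 + t) := by
        rw [add_comm, ENNReal.ofReal_add zero_le_one ht0, ENNReal.ofReal_one]
    _ ≤ ENNReal.ofReal (1 + t) ^ (m + 1) :=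
        le_self_pow₀ (ENNReal.one_le_ofReal.2 (by linarith)) m.succ_ne_zero
    _ = volume (ball (0 : EuclideanSpace ℝ (Fin (m + 1))) (1 + t)) / V := by
        rw [Measure.addHaar_ball _ _ (by linarith), finrank_euclideanSpace_fin,
          ENNReal.mul_div_cancel_right hV measure_ball_lt_top.ne, ENNReal.ofReal_pow (by linarith)]
    _ ≤ volume {x | MHLb (m + 1) ((ball 0 1).indicator 1) x > ENNReal.ofReal α} / V := by
        gcongr
    _ ≤ CHLb (m + 1) α :=
        le_CHLb measurableSet_ball (pos_iff_ne_zero.2 hV) measure_ball_lt_top α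

end Superlevel

lemma exists_cap_radius (m : ℕ) {w : ℝ} (hw : 0 < w) :
    ∃ c : ℝ, 0 < c ∧ ∃ α₀ ∈ Ioo (0 : ℝ) 1, ∀ α ∈ Ioo α₀ 1,
      ∃ t : ℝ, 0 ≤ t ∧ t ≤ 1 / 6 ∧ 2 ^ m * √(3 * t) ^ (m + 2) < (1 - α) * w ∧
      c * (1 / α - 1) ^ (2 / ((m : ℝ) + 2)) ≤ t := by
  have hδ : 1 / (2 * (w + 1)) < 1 / 2 := by
    rw [div_lt_div_iff₀ (by positivity) two_pos]; linarith
  refine ⟨(w / 2 ^ (m + 2)) ^ (2 / ((m : ℝ) + 2)) / 3, by positivity,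
    1 - 1 / (2 * (w + 1)), ⟨by linarith, by simp only [sub_lt_self_iff]; positivity⟩, ?_⟩
  rintro α ⟨hα₀, hα1⟩
  have hα : 1 / 2 < α := by linarith
  have hεw : (1 - α) * w < 1 / 2 := by
    rw [sub_lt_comm, lt_div_iff₀ (by positivity)] at hα₀
    nlinarith
  -- `s = √(3t)` makes the cap bound `2 ^ m * s ^ (m + 2)` equal to `(1 - α) * w / 2`;
  -- the choice of `α₀` ensures `s ≤ 1/2`.
  set q := (1 - α) * w / 2 ^ (m + 1) with hq_def
  have hq : 0 ≤ q := div_nonneg (mul_nonneg (by linarith) hw.le) (by positivity)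
  set s := q ^ ((m + 2 : ℕ) : ℝ)⁻¹
  have hs0 : 0 ≤ s := by positivity
  have hsN : s ^ (m + 2) = q := Real.rpow_inv_natCast_pow hq (by omega)
  have hs : s ≤ 1 / 2 := by
    refine le_of_pow_le_pow_left₀ (n := m + 2) (by omega) (by norm_num) ?_
    rw [hsN, div_pow, one_pow, pow_succ 2 (m + 1),
      div_le_div_iff₀ (by positivity) (by positivity)]
    nlinarith [pow_pos (two_pos (α := ℝ)) (m + 1)]
  refine ⟨s ^ 2 / 3, by positivity, by nlinarith, ?_, ?_⟩
  · have hq2 : 2 ^ m * q = (1 - α) * w / 2 := by rw [hq_def, pow_succ]; field_simp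
    rw [mul_div_cancel₀ _ three_ne_zero, Real.sqrt_sq hs0, hsN, hq2]
    nlinarith
  · have hs2 : s ^ 2 = q ^ (2 / ((m : ℝ) + 2)) := by
      rw [← Real.rpow_mul_natCast hq]
      push_cast
      ring_nf
    have hαinv : 0 ≤ 1 / α - 1 := sub_nonneg.2 (one_le_one_div (by linarith) hα1.le)
    have hbase : w / 2 ^ (m + 2) * (1 / α - 1) ≤ q := by
      have : 1 / α - 1 ≤ 2 * (1 - α) := by
        rw [div_sub_one (by linarith), div_le_iff₀ (by linarith)]; nlinarith
      calc w / 2 ^ (m + 2) * (1 / α - 1) ≤ w / 2 ^ (m + 2) * (2 * (1 - α)) := by gcongr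
        _ = q := by rw [hq_def, pow_succ 2 (m + 1)]; field_simp
    calc (w / 2 ^ (m + 2)) ^ (2 / ((m : ℝ) + 2)) / 3 * (1 / α - 1) ^ (2 / ((m : ℝ) + 2))
        = (w / 2 ^ (m + 2) * (1 / α - 1)) ^ (2 / ((m : ℝ) + 2)) / 3 := by
          rw [Real.mul_rpow (by positivity) hαinv]; ring
      _ ≤ q ^ (2 / ((m : ℝ) + 2)) / 3 := by gcongr
      _ = s ^ 2 / 3 := by rw [hs2]

theorem uncentered_ball_solyanik_lower (n : ℕ) (hn : 1 ≤ n) :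
    ∃ c : ℝ, 0 < c ∧ ∃ α₀ ∈ Set.Ioo (0 : ℝ) 1, ∀ α ∈ Set.Ioo α₀ 1,
      ENNReal.ofReal (c * (1 / α - 1) ^ (2 / ((n : ℝ) + 1))) ≤ CHLb n α - 1 := by
  obtain ⟨m, rfl⟩ : ∃ m, n = m + 1 := ⟨n - 1, by omega⟩
  have hw : 0 < (volume (ball (0 : EuclideanSpace ℝ (Fin (m + 1))) (1 / 2))).toReal :=
    ENNReal.toReal_pos (measure_ball_pos volume _ one_half_pos).ne' measure_ball_lt_top.ne
  obtain ⟨c, hc, α₀, hα₀, hradius⟩ := exists_cap_radius m hw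
  refine ⟨c, hc, α₀, hα₀, fun α hα => ?_⟩
  obtain ⟨t, ht0, ht, hcap, hct⟩ := hradius α hα
  have hexp : ((m + 1 : ℕ) : ℝ) + 1 = (m : ℝ) + 2 := by push_cast; ring
  rw [hexp]
  exact (ENNReal.ofReal_le_ofReal hct).trans
    (ofReal_le_CHLb_sub_one (hα₀.1.trans hα.1).le ht0 ht hcap)
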